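/- Let G be a finite simple graph on n vertices and G' the graph obtained from G by adding a vertex x adjacent to all of V(G), vertices x₁,…,x_{n+3} each adjacent to x, and a vertex y adjacent to each xᵢ. If S is a minimal feedback vertex set of G' with |S| ≥ k + n + 2, then x ∉ S and y ∉ S, |S ∩ {x₁,…,x_{n+3}}| = n + 2, and S ∩ V(G) is a minimal vertex cover of G of size at least k. -/

import Mathlib

open SimpleGraph

def IsFVS {V : Type*} (G : SimpleGraph V) (S : Set V) : Prop :=
  (G.induce (Sᶜ : Set V)).IsAcyclic

def IsMinFVS {V : Type*} (G : SimpleGraph V) (S : Set V) : Prop :=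
  IsFVS G S ∧ ∀ T : Set V, T ⊂ S → ¬ IsFVS G T

def IsVertexCover {V : Type*} (G : SimpleGraph V) (C : Set V) : Prop :=
  ∀ ⦃u w : V⦄, G.Adj u w → u ∈ C ∨ w ∈ C

def IsMinVertexCover {V : Type*} (G : SimpleGraph V) (C : Set V) : Prop :=
  _root_.IsVertexCover G C ∧ ∀ T : Set V, T ⊂ C → ¬ _root_.IsVertexCover G T

/-- Relation for the extended graph `G'` (see paper): `Sum.inr false = x`,
`Sum.inr true = y`, `Sum.inl (Sum.inl v)` are vertices of `G`, and
`Sum.inl (Sum.inr i)` are the new vertices `x₁,…,x_{n+3}`. -/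
def extRel {V : Type*} [Fintype V] (G : SimpleGraph V) :
    (V ⊕ Fin (Fintype.card V + 3)) ⊕ Bool →
    (V ⊕ Fin (Fintype.card V + 3)) ⊕ Bool → Prop :=
  fun a b =>
    match a, b with
    | .inl (.inl v), .inl (.inl w) => G.Adj v w
    | .inr false, .inl _ => True
    | .inr true, .inl (.inr _) => True
    | _, _ => False

def Gext {V : Type*} [Fintype V] (G : SimpleGraph V) :
    SimpleGraph ((V ⊕ Fin (Fintype.card V + 3)) ⊕ Bool) :=
  SimpleGraph.fromRel (extRel G)

/-! In a minimal feedback vertex set `S` every `s ∈ S` has a private cycle, one meeting `S`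
only in `s`, and every vertex of a cycle has two distinct neighbours on it. The private cycle
of an `xᵢ ∈ S` therefore passes through both `x` and `y`, which keeps them out of `S`; some
`xᵢ` is in `S` by the size bound. With `x, y ∉ S` the 4-cycles `x xᵢ y xⱼ` leave at most one
`xᵢ` outside `S`, and the private cycle of an `xᵢ` leaves at least one, since it enters `y`
through another `xⱼ`. The triangles `x u v` make `S ∩ V(G)` a vertex cover; it is minimal
because the private cycle of `v ∈ S ∩ V(G)` must leave `v` along an edge `vw` of `G` with
`w ∉ S`. -/

namespace SimpleGraph

variable {W : Type*} {H : SimpleGraph W}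

lemma Walk.IsCycle.exists_adj_ne {u v : W} {p : H.Walk u u} (hp : p.IsCycle)
    (hv : v ∈ p.support) (a : W) : ∃ w ∈ p.support, H.Adj v w ∧ w ≠ a := by
  obtain ⟨w, hw, hwa⟩ := Set.exists_ne_of_one_lt_ncard
    (by rw [hp.ncard_neighborSet_toSubgraph_eq_two hv]; norm_num) a
  exact ⟨w, Walk.mem_support_of_adj_toSubgraph hw.symm, p.toSubgraph.adj_sub hw, hwa⟩

lemma Walk.isCycle_triangle {a b c : W} (hab : H.Adj a b) (hbc : H.Adj b c)
    (hca : H.Adj c a) : (cons hab (cons hbc (cons hca nil))).IsCycle := by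
  simp [Walk.cons_isCycle_iff, hab.ne, hbc.ne, hca.ne, hab.ne.symm, hca.ne.symm]

lemma Walk.isCycle_square {a b c d : W} (hab : H.Adj a b) (hbc : H.Adj b c)
    (hcd : H.Adj c d) (hda : H.Adj d a) (hac : a ≠ c) (hbd : b ≠ d) :
    (cons hab (cons hbc (cons hcd (cons hda nil)))).IsCycle := by
  simp [Walk.cons_isCycle_iff, hab.ne, hbc.ne, hcd.ne, hda.ne, hab.ne.symm, hda.ne.symm, hac,
    hac.symm, hbd]

end SimpleGraph

section FeedbackVertexSet

variable {W : Type*} {H : SimpleGraph W} {S : Set W}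

lemma isFVS_iff_forall_isCycle :
    IsFVS H S ↔ ∀ ⦃v : W⦄ (p : H.Walk v v), p.IsCycle → ∃ w ∈ p.support, w ∈ S := by
  constructor
  · intro hS v p hp
    by_contra! hpS
    exact hS (p.induce Sᶜ hpS) <| (Walk.isCycle_map_iff_of_injective
      (f := (Embedding.induce (G := H) Sᶜ).toHom) Subtype.val_injective).mp
      (by rwa [Walk.map_induce])
  · intro h v c hc
    obtain ⟨w, hw, hwS⟩ := h _ ((Walk.isCycle_map_iff_of_injective
      (f := (Embedding.induce (G := H) Sᶜ).toHom) Subtype.val_injective).mpr hc)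
    obtain ⟨w', -, rfl⟩ := List.mem_map.mp (by simpa only [Walk.support_map] using hw)
    exact w'.2 hwS

lemma IsFVS.exists_mem_support (hS : IsFVS H S) {v : W} {p : H.Walk v v} (hp : p.IsCycle) :
    ∃ w ∈ p.support, w ∈ S :=
  isFVS_iff_forall_isCycle.mp hS p hp

lemma IsMinFVS.exists_isCycle_support_inter_eq {s : W} (hS : IsMinFVS H S) (hs : s ∈ S) :
    ∃ (v : W) (p : H.Walk v v), p.IsCycle ∧ s ∈ p.support ∧ ∀ w ∈ p.support, w ∈ S → w = s := by
  have hnot := hS.2 (S \ {s}) (Set.sdiff_singleton_ssubset.mpr hs)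
  rw [isFVS_iff_forall_isCycle] at hnot
  push Not at hnot
  obtain ⟨v, p, hp, hpS⟩ := hnot
  obtain ⟨w, hw, hwS⟩ := hS.1.exists_mem_support hp
  refine ⟨v, p, hp, ?_, fun u hu huS => ?_⟩
  · by_contra hsp
    exact hpS w hw ⟨hwS, fun hws => hsp (hws ▸ hw)⟩
  · by_contra hus
    exact hpS u hu ⟨huS, hus⟩

end FeedbackVertexSet

lemma Set.ncard_eq_ncard_preimage_inl_add_ncard_preimage_inr {α β : Type*} [Finite α]
    [Finite β] (s : Set (α ⊕ β)) :
    s.ncard = (Sum.inl ⁻¹' s).ncard + (Sum.inr ⁻¹' s).ncard := by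
  conv_lhs => rw [← Set.image_preimage_inl_union_image_preimage_inr s]
  rw [Set.ncard_union_eq Set.disjoint_image_inl_image_inr,
    Set.ncard_image_of_injective _ Sum.inl_injective,
    Set.ncard_image_of_injective _ Sum.inr_injective]

section Gext

variable {V : Type*} [Fintype V] {G : SimpleGraph V}

lemma gext_adj_x (z : V ⊕ Fin (Fintype.card V + 3)) :
    (Gext G).Adj (.inr false) (.inl z) := by
  simp [Gext, extRel]

lemma gext_adj_y (i : Fin (Fintype.card V + 3)) :
    (Gext G).Adj (.inr true) (.inl (.inr i)) := by
  simp [Gext, extRel]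

lemma gext_adj_of_adj {u w : V} (h : G.Adj u w) :
    (Gext G).Adj (.inl (.inl u)) (.inl (.inl w)) := by
  simp [Gext, extRel, h, h.ne]

lemma gext_adj_xi_iff {i : Fin (Fintype.card V + 3)} {z} :
    (Gext G).Adj (.inl (.inr i)) z ↔ z = .inr false ∨ z = .inr true := by
  rcases z with (v | j) | (_ | _) <;> simp [Gext, extRel]

lemma gext_adj_y_iff {z} :
    (Gext G).Adj (.inr true) z ↔ ∃ i : Fin (Fintype.card V + 3), z = .inl (.inr i) := by
  rcases z with (v | j) | (_ | _) <;> simp [Gext, extRel]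

lemma gext_adj_vertex_iff {v : V} {z} :
    (Gext G).Adj (.inl (.inl v)) z ↔ z = .inr false ∨ ∃ w, z = .inl (.inl w) ∧ G.Adj v w := by
  rcases z with (w | j) | (_ | _) <;> simp [Gext, extRel]
  exact ⟨fun h => h.2.elim id .symm, fun h => ⟨h.ne, .inl h⟩⟩

lemma gext_x_mem_support_and_y_mem_support_of_xi_mem_support {u} {p : (Gext G).Walk u u}
    (hp : p.IsCycle) {i : Fin (Fintype.card V + 3)} (hi : .inl (.inr i) ∈ p.support) :
    .inr false ∈ p.support ∧ .inr true ∈ p.support := by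
  obtain ⟨a, ha, hia, hax⟩ := hp.exists_adj_ne hi (.inr false)
  obtain ⟨b, hb, hib, hby⟩ := hp.exists_adj_ne hi (.inr true)
  exact ⟨(gext_adj_xi_iff.mp hib).resolve_right hby ▸ hb,
    (gext_adj_xi_iff.mp hia).resolve_left hax ▸ ha⟩

lemma ncard_inter_setOf_xi (S : Set ((V ⊕ Fin (Fintype.card V + 3)) ⊕ Bool)) :
    (S ∩ {z | ∃ i : Fin (Fintype.card V + 3), z = .inl (.inr i)}).ncard =
      {i : Fin (Fintype.card V + 3) | .inl (.inr i) ∈ S}.ncard := by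
  have h : S ∩ {z | ∃ i : Fin (Fintype.card V + 3), z = .inl (.inr i)} =
      (Sum.inl ∘ Sum.inr) '' {i | .inl (.inr i) ∈ S} := by
    ext z
    constructor
    · rintro ⟨hz, i, rfl⟩
      exact ⟨i, hz, rfl⟩
    · rintro ⟨i, hi, rfl⟩
      exact ⟨hi, i, rfl⟩
  rw [h, Set.ncard_image_of_injective _ (Sum.inl_injective.comp Sum.inr_injective)]

variable {S : Set ((V ⊕ Fin (Fintype.card V + 3)) ⊕ Bool)}

lemma IsMinFVS.gext_x_notMem_and_y_notMem_of_xi_mem (hS : IsMinFVS (Gext G) S)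
    {i : Fin (Fintype.card V + 3)} (hi : .inl (.inr i) ∈ S) :
    .inr false ∉ S ∧ .inr true ∉ S := by
  obtain ⟨u, p, hp, hip, hpS⟩ := hS.exists_isCycle_support_inter_eq hi
  obtain ⟨hx, hy⟩ := gext_x_mem_support_and_y_mem_support_of_xi_mem_support hp hip
  exact ⟨fun h => Sum.inr_ne_inl (hpS _ hx h), fun h => Sum.inr_ne_inl (hpS _ hy h)⟩

lemma IsMinFVS.gext_x_notMem_of_y_mem (hS : IsMinFVS (Gext G) S) (hy : .inr true ∈ S) :
    .inr false ∉ S := by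
  obtain ⟨u, p, hp, hyp, hpS⟩ := hS.exists_isCycle_support_inter_eq hy
  obtain ⟨a, ha, hya, -⟩ := hp.exists_adj_ne hyp (.inr true)
  obtain ⟨i, rfl⟩ := gext_adj_y_iff.mp hya
  exact fun h => Bool.false_ne_true
    (Sum.inr_injective (hpS _ (gext_x_mem_support_and_y_mem_support_of_xi_mem_support hp ha).1 h))

lemma IsMinFVS.gext_exists_xi_notMem (hS : IsMinFVS (Gext G) S) :
    ∃ i : Fin (Fintype.card V + 3), .inl (.inr i) ∉ S := by
  by_contra! hB
  obtain ⟨u, p, hp, hip, hpS⟩ := hS.exists_isCycle_support_inter_eq (hB 0)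
  obtain ⟨a, ha, hya, hai⟩ := hp.exists_adj_ne
    (gext_x_mem_support_and_y_mem_support_of_xi_mem_support hp hip).2 (.inl (.inr 0))
  obtain ⟨j, rfl⟩ := gext_adj_y_iff.mp hya
  exact hai (hpS _ ha (hB j))

lemma IsFVS.gext_subsingleton_xi_notMem (hS : IsFVS (Gext G) S) (hx : .inr false ∉ S)
    (hy : .inr true ∉ S) : {i : Fin (Fintype.card V + 3) | .inl (.inr i) ∉ S}.Subsingleton := by
  intro i hi j hj
  by_contra hij
  obtain ⟨w, hw, hwS⟩ := hS.exists_mem_support <| Walk.isCycle_square (gext_adj_x _)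
    (gext_adj_y i).symm (gext_adj_y j) (gext_adj_x _).symm (by simp) (by simpa using hij)
  simp only [Walk.support_cons, Walk.support_nil, List.mem_cons, List.not_mem_nil] at hw
  rcases hw with rfl | rfl | rfl | rfl | rfl | h <;> contradiction

lemma IsFVS.gext_isVertexCover (hS : IsFVS (Gext G) S) (hx : .inr false ∉ S) :
    _root_.IsVertexCover G {v | .inl (.inl v) ∈ S} := by
  intro u v huv
  by_contra! ⟨hu, hv⟩
  obtain ⟨w, hw, hwS⟩ := hS.exists_mem_support <| Walk.isCycle_triangle (gext_adj_x _)
    (gext_adj_of_adj huv) (gext_adj_x _).symm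
  simp only [Walk.support_cons, Walk.support_nil, List.mem_cons, List.not_mem_nil] at hw
  rcases hw with rfl | rfl | rfl | rfl | h
  exacts [hx hwS, hu hwS, hv hwS, hx hwS, h]

lemma IsMinFVS.gext_not_isVertexCover_of_ssubset (hS : IsMinFVS (Gext G) S) {T : Set V}
    (hT : T ⊂ {v | .inl (.inl v) ∈ S}) : ¬ _root_.IsVertexCover G T := by
  intro hTvc
  obtain ⟨v, hvS, hvT⟩ := Set.exists_of_ssubset hT
  obtain ⟨u, p, hp, hvp, hpS⟩ := hS.exists_isCycle_support_inter_eq hvS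
  obtain ⟨z, hz, hvz, hzx⟩ := hp.exists_adj_ne hvp (.inr false)
  obtain ⟨w, rfl, hvw⟩ := (gext_adj_vertex_iff.mp hvz).resolve_left hzx
  have hwS : .inl (.inl w) ∉ S := fun h => hvw.ne (by simpa using (hpS _ hz h).symm)
  exact (hTvc hvw).elim hvT fun hwT => hwS (hT.1 hwT)

lemma IsMinFVS.gext_ncard_preimage_inr_le_one (hS : IsMinFVS (Gext G) S) :
    (Sum.inr ⁻¹' S).ncard ≤ 1 := by
  refine (Set.ncard_le_one (Set.toFinite _)).mpr ?_
  rintro (_ | _) ha (_ | _) hb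
  · rfl
  · exact (hS.gext_x_notMem_of_y_mem hb ha).elim
  · exact (hS.gext_x_notMem_of_y_mem ha hb).elim
  · rfl

lemma IsMinFVS.gext_ncard_xi_mem (hS : IsMinFVS (Gext G) S) (hx : .inr false ∉ S)
    (hy : .inr true ∉ S) :
    {i : Fin (Fintype.card V + 3) | .inl (.inr i) ∈ S}.ncard = Fintype.card V + 2 := by
  obtain ⟨i₀, hi₀⟩ := hS.gext_exists_xi_notMem
  have hcompl : {i : Fin (Fintype.card V + 3) | .inl (.inr i) ∈ S} =
      {i | .inl (.inr i) ∉ S}ᶜ := by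
    ext; simp
  rw [hcompl, Set.ncard_compl, (hS.1.gext_subsingleton_xi_notMem hx hy).eq_singleton_of_mem hi₀,
    Set.ncard_singleton, Nat.card_eq_fintype_card, Fintype.card_fin]
  omega

end Gext

theorem minimal_vc_of_minimal_fvs_general {V : Type*} [Fintype V] (G : SimpleGraph V)
    (k : ℕ)
    (S : Set ((V ⊕ Fin (Fintype.card V + 3)) ⊕ Bool))
    (hS : IsMinFVS (Gext G) S)
    (hsize : k + Fintype.card V + 2 ≤ S.ncard) :
    (Sum.inr false : (V ⊕ Fin (Fintype.card V + 3)) ⊕ Bool) ∉ S ∧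
    (Sum.inr true : (V ⊕ Fin (Fintype.card V + 3)) ⊕ Bool) ∉ S ∧
    (S ∩ {z | ∃ i : Fin (Fintype.card V + 3), z = Sum.inl (Sum.inr i)}).ncard =
      Fintype.card V + 2 ∧
    IsMinVertexCover G {v : V | Sum.inl (Sum.inl v) ∈ S} ∧
    k ≤ {v : V | Sum.inl (Sum.inl v) ∈ S}.ncard := by
  have hcard := Set.ncard_eq_ncard_preimage_inl_add_ncard_preimage_inr S
  have hcard_inl : (Sum.inl ⁻¹' S).ncard = {v : V | Sum.inl (Sum.inl v) ∈ S}.ncard +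
      {i : Fin (Fintype.card V + 3) | Sum.inl (Sum.inr i) ∈ S}.ncard :=
    Set.ncard_eq_ncard_preimage_inl_add_ncard_preimage_inr _
  have hC : {v : V | Sum.inl (Sum.inl v) ∈ S}.ncard ≤ Fintype.card V :=
    (Set.ncard_le_card _).trans_eq Nat.card_eq_fintype_card
  have hxy := hS.gext_ncard_preimage_inr_le_one
  obtain ⟨i, hi⟩ : {i : Fin (Fintype.card V + 3) | Sum.inl (Sum.inr i) ∈ S}.Nonempty :=
    Set.nonempty_of_ncard_ne_zero (by omega)
  obtain ⟨hx, hy⟩ := hS.gext_x_notMem_and_y_notMem_of_xi_mem hi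
  have hB := hS.gext_ncard_xi_mem hx hy
  have hxy_empty : Sum.inr ⁻¹' S = ∅ := by
    ext (_ | _) <;> simpa
  refine ⟨hx, hy, (ncard_inter_setOf_xi S).trans hB,
    ⟨hS.1.gext_isVertexCover hx, fun T hT => hS.gext_not_isVertexCover_of_ssubset hT⟩, ?_⟩
  rw [hxy_empty, Set.ncard_empty] at hcard
  omega

/-- If `S` is a minimal feedback vertex set of `G'` with `|S| ≥ k + n + 2`,
then `x ∉ S`, `y ∉ S`, `S` contains exactly `n + 2` of the vertices
`x₁,…,x_{n+3}`, and `S ∩ V(G)` is a minimal vertex cover of `G` of size at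
least `k`. -/
theorem minimal_vc_of_minimal_fvs {V : Type*} [Fintype V] (G : SimpleGraph V)
    (k : ℕ) (hk : 0 < k)
    (S : Set ((V ⊕ Fin (Fintype.card V + 3)) ⊕ Bool))
    (hS : IsMinFVS (Gext G) S)
    (hsize : k + Fintype.card V + 2 ≤ S.ncard) :
    (Sum.inr false : (V ⊕ Fin (Fintype.card V + 3)) ⊕ Bool) ∉ S ∧
    (Sum.inr true : (V ⊕ Fin (Fintype.card V + 3)) ⊕ Bool) ∉ S ∧
    (S ∩ {z | ∃ i : Fin (Fintype.card V + 3), z = Sum.inl (Sum.inr i)}).ncard =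
      Fintype.card V + 2 ∧
    IsMinVertexCover G {v : V | Sum.inl (Sum.inl v) ∈ S} ∧
    k ≤ {v : V | Sum.inl (Sum.inl v) ∈ S}.ncard :=
  minimal_vc_of_minimal_fvs_general G k S hS hsize
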